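/- arXiv:1801.04425 — 2 statements merged into one kernel-verified Lean document; each statement's English description precedes it below -/
import Mathlib

section
/- Let x be a uniformly random string of length n ≥ 2 over an alphabet of size σ ≥ 2 and let 1 ≤ k ≤ log n / log log n. Define X_{i,j} as the largest ℓ such that both x[i..i+ℓ-1] and x[j..j+ℓ-1] exist and are at Hamming distance at most k. Then for m ≥ k, P(X_{i,j} ≥ m) ≤ C(m,k) · σ^(k-m), for any i ≠ j. -/
/-!
Choose `m - k` offsets `S` at which the two windows must agree (`C(m, k)` choices).
When the second window starts later, each agreement `x (j + t) = x (i + t)` with `t ∈ S`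
determines a letter from an earlier one, so `x` is determined by its letters outside
`j + S`; hence at most `σ ^ (n - (m - k))` strings agree on `S`, and a union bound over `S`
gives the claim.
-/

open Finset Function Fintype

section
variable {α β ι : Type*}

lemma eq_of_eqOn_compl_image [Preorder α] [WellFoundedLT α] {e f : ι → α}
    (hfe : ∀ t, f t < e t) {S : Finset ι} {x y : α → β}
    (hx : ∀ t ∈ S, x (f t) = x (e t)) (hy : ∀ t ∈ S, y (f t) = y (e t))
    (hxy : Set.EqOn x y (e '' S)ᶜ) : x = y := by
  funext c
  induction c using WellFoundedLT.induction with
  | _ c ih =>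
    by_cases hc : c ∈ e '' S
    · obtain ⟨t, ht, rfl⟩ := hc
      rw [← hx t ht, ← hy t ht]
      exact ih _ (hfe t)
    · exact hxy hc

variable [Fintype α] [DecidableEq α] [Fintype β] [DecidableEq β]

def agreeOn (e f : ι → α) (S : Finset ι) : Finset (α → β) :=
  {x | ∀ t ∈ S, x (f t) = x (e t)}

variable [Preorder α] [WellFoundedLT α] {e f : ι → α}

lemma card_agreeOn_le (he : Injective e) (hfe : ∀ t, f t < e t) (S : Finset ι) :
    #(agreeOn (β := β) e f S) ≤ card β ^ (card α - #S) := by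
  let restrict (x : α → β) (c : {c // c ∈ (S.image e)ᶜ}) : β := x c
  calc #(agreeOn e f S)
      ≤ #(univ : Finset ({c // c ∈ (S.image e)ᶜ} → β)) := by
        refine card_le_card_of_injOn restrict (fun _ _ ↦ mem_coe.2 (mem_univ _)) ?_
        intro x hx y hy hxy
        rw [agreeOn, coe_filter, Set.mem_ofPred_eq] at hx hy
        refine eq_of_eqOn_compl_image hfe hx.2 hy.2 fun c hc ↦ congrFun hxy ⟨c, ?_⟩
        simpa [mem_compl, ← coe_image] using hc
    _ = card β ^ (card α - #S) := by
        rw [card_univ, card_fun, card_coe, card_compl, card_image_of_injective S he]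

lemma card_filter_card_ne_le [Fintype ι] [DecidableEq ι] (he : Injective e)
    (hfe : ∀ t, f t < e t) (k : ℕ) :
    #{x : α → β | #{t | x (f t) ≠ x (e t)} ≤ k}
      ≤ (card ι).choose (card ι - k) * card β ^ (card α - (card ι - k)) := by
  have hcover : ({x : α → β | #{t | x (f t) ≠ x (e t)} ≤ k} : Finset (α → β))
      ⊆ (powersetCard (card ι - k) univ).biUnion (agreeOn e f) := by
    intro x hx
    have hsplit := card_filter_add_card_filter_not
      (s := (univ : Finset ι)) fun t ↦ x (f t) = x (e t)
    obtain ⟨S, hS, hScard⟩ := exists_subset_card_eq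
      (s := {t | x (f t) = x (e t)}) (n := card ι - k) (by
        simp only [ne_eq, mem_filter, mem_univ, true_and, card_univ, tsub_le_iff_right]
          at hx hsplit ⊢
        omega)
    simp only [mem_biUnion, mem_powersetCard_univ, agreeOn, mem_filter_univ]
    exact ⟨S, hScard, fun t ht ↦ (mem_filter.1 (hS ht)).2⟩
  calc _ ≤ #((powersetCard (card ι - k) univ).biUnion (agreeOn e f)) := card_le_card hcover
    _ ≤ ∑ S ∈ powersetCard (card ι - k) univ, #(agreeOn (β := β) e f S) := card_biUnion_le
    _ ≤ ∑ _S ∈ powersetCard (card ι - k) (univ : Finset ι),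
          card β ^ (card α - (card ι - k)) := by
        refine sum_le_sum fun S hS ↦ (card_agreeOn_le he hfe S).trans_eq ?_
        rw [mem_powersetCard_univ.1 hS]
    _ = _ := by rw [sum_const, card_powersetCard, card_univ, smul_eq_mul]

end

theorem suffix_lcp_k_tail_bound (n σ k m i j : ℕ) (hσ : 2 ≤ σ)
    (hkm : k ≤ m) (hij : i ≠ j) (hi : i + m ≤ n) (hj : j + m ≤ n) :
    ((Finset.univ.filter
        (fun x : Fin n → Fin σ =>
          (Finset.univ.filter
            (fun t : Fin m =>
              x ⟨i + t, by omega⟩ ≠ x ⟨j + t, by omega⟩)).card ≤ k)).card : ℝ)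
      / (Fintype.card (Fin n → Fin σ) : ℝ)
    ≤ (m.choose k : ℝ) * (σ : ℝ) ^ ((k : ℤ) - (m : ℤ)) := by
  wlog hlt : i < j generalizing i j
  · convert this j i hij.symm hj hi (by omega) using 7
    exact filter_congr fun _ _ ↦ ne_comm
  have hcount := card_filter_card_ne_le (β := Fin σ)
    (e := fun t : Fin m ↦ (⟨j + t, by omega⟩ : Fin n)) (f := fun t ↦ ⟨i + t, by omega⟩)
    (fun s t hst ↦ Fin.ext (by simpa using hst)) (fun t ↦ by simp [Fin.lt_def, hlt]) k
  simp only [Fintype.card_fin, Nat.choose_symm hkm] at hcount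
  have hσpos : (0 : ℝ) < σ := by exact_mod_cast (by omega : 0 < σ)
  rw [card_fun, Fintype.card_fin, Fintype.card_fin, Nat.cast_pow, div_le_iff₀ (by positivity),
    mul_assoc, ← zpow_natCast (σ : ℝ) n, ← zpow_add₀ hσpos.ne',
    show (k : ℤ) - m + n = ((n - (m - k) : ℕ) : ℤ) by omega, zpow_natCast]
  exact_mod_cast hcount
end

section
/- Let x be a uniformly random string of length n over an alphabet of size σ ≥ 2 with i.i.d. uniform letters, and 1 ≤ k ≤ log n / log log n. Let Y be the maximum over pairs of distinct suffixes of x of the length of their longest common prefix with at most k Hamming errors. Then there exists a constant α (depending only on σ) such that E[Y] ≤ α (log_σ n + k) + O(1); in particular E[Y] = O(log_σ n). -/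
/-- Extension of a finite string to all of `ℕ` (padding with `0`). -/
def extStr {n σ : ℕ} [NeZero σ] (x : Fin n → Fin σ) : ℕ → Fin σ :=
  fun t => if h : t < n then x ⟨t, h⟩ else 0

/-- The longest common prefix with at most `k` Hamming errors of the suffixes of `x`
starting at positions `i` and `j`: the largest `ℓ` such that both windows
`x[i..i+ℓ-1]` and `x[j..j+ℓ-1]` exist and are at Hamming distance at most `k`. -/
def lcpK (n σ k : ℕ) [NeZero σ] (x : Fin n → Fin σ) (i j : ℕ) : ℕ :=
  Nat.findGreatest
    (fun ℓ => i + ℓ ≤ n ∧ j + ℓ ≤ n ∧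
      ((Finset.range ℓ).filter (fun t => extStr x (i + t) ≠ extStr x (j + t))).card ≤ k) n

/-- The maximal longest common prefix with `k` errors over all pairs of distinct suffixes. -/
def maxLcpK (n σ k : ℕ) [NeZero σ] (x : Fin n → Fin σ) : ℕ :=
  (((Finset.range n) ×ˢ (Finset.range n)).filter (fun p => p.1 < p.2)).sup
    (fun p => lcpK n σ k x p.1 p.2)

/-!
By the layer-cake formula, `E[Y] = ∑_{m ≥ 1} P(Y ≥ m)`. For a pair of suffixes `i < j`,
`lcp_k ≥ m` means that outside some `k`-set `S ⊆ [0, m)` each letter `x[j + t]` copies the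
earlier letter `x[i + t]`; such a string is determined by its other letters, so each pattern has
probability `σ^{k - m}` and `P(lcp_k ≥ m) ≤ C(m, k) σ^{k - m} ≤ (2σ)^k (3/4)^m`, the binomial
coefficient being bounded by one term of `(1 + 1/2)^m`. A union bound over the `n²` pairs gives
`P(Y ≥ m) ≤ n² (2σ)^k (3/4)^m`, which is at most `1` from `B = ⌈α (log_σ n + k)⌉` on, where
`α = 2 log (2σ) / log (4/3)`. The terms below `B` contribute at most `B`, the geometric tail at
most `4`.
-/

open Finset

theorem choose_mul_pow_le_add_pow {R : Type*} [CommSemiring R] [PartialOrder R] [IsOrderedRing R]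
    {t : R} (ht : 0 ≤ t) (m k : ℕ) : (m.choose k : R) * t ^ k ≤ (1 + t) ^ m := by
  rcases lt_or_ge m k with hmk | hkm
  · simp [Nat.choose_eq_zero_of_lt hmk, pow_nonneg (add_nonneg zero_le_one ht)]
  rw [add_comm, add_pow]
  calc (m.choose k : R) * t ^ k = t ^ k * 1 ^ (m - k) * m.choose k := by ring
    _ ≤ ∑ j ∈ range (m + 1), t ^ j * 1 ^ (m - j) * m.choose j :=
      single_le_sum (f := fun j ↦ t ^ j * 1 ^ (m - j) * m.choose j)
        (fun j _ ↦ mul_nonneg (by simpa using pow_nonneg ht j) (Nat.cast_nonneg _))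
        (mem_range.2 (Nat.lt_succ_of_le hkm))

theorem sum_eq_sum_range_card_filter_lt {α : Type*} (s : Finset α) (f : α → ℕ) {N : ℕ}
    (hf : ∀ x ∈ s, f x ≤ N) : ∑ x ∈ s, f x = ∑ m ∈ range N, #{x ∈ s | m < f x} := by
  calc ∑ x ∈ s, f x = ∑ x ∈ s, #{m ∈ range N | m < f x} := by
        refine sum_congr rfl fun x hx ↦ ?_
        rw [show {m ∈ range N | m < f x} = range (f x) by
          ext m; simp only [mem_filter, mem_range]; have := hf x hx; omega, card_range]
    _ = ∑ m ∈ range N, #{x ∈ s | m < f x} := by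
        simp only [card_filter]
        exact sum_comm

theorem sum_range_le_of_le_one_of_le_geom {p : ℕ → ℝ} {C r : ℝ} {B : ℕ}
    (hp0 : ∀ m, 0 ≤ p m) (hp1 : ∀ m, p m ≤ 1) (hpC : ∀ m, p m ≤ C * r ^ m)
    (hr0 : 0 ≤ r) (hr1 : r < 1) (hB : C * r ^ B ≤ 1) (N : ℕ) :
    ∑ m ∈ range N, p m ≤ B + 1 / (1 - r) := by
  have hC : 0 ≤ C := by simpa using (hp0 0).trans (hpC 0)
  calc ∑ m ∈ range N, p m ≤ ∑ m ∈ range (B + N), p m :=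
        sum_le_sum_of_subset_of_nonneg (range_subset_range.2 (by omega)) fun m _ _ ↦ hp0 m
    _ = ∑ m ∈ range B, p m + ∑ m ∈ Ico B (B + N), p m :=
        (sum_range_add_sum_Ico p (by omega)).symm
    _ ≤ ∑ m ∈ range B, 1 + ∑ m ∈ Ico B (B + N), C * r ^ m :=
        add_le_add (sum_le_sum fun m _ ↦ hp1 m) (sum_le_sum fun m _ ↦ hpC m)
    _ ≤ B + C * (r ^ B / (1 - r)) := by
        rw [← mul_sum]
        gcongr
        · simp
        · exact geom_sum_Ico_le_of_lt_one hr0 hr1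
    _ ≤ B + 1 / (1 - r) := by
        rw [← mul_div_assoc]
        gcongr

theorem eq_of_copies_of_eqOn_compl {α : Type*} {J : Set ℕ} (f : ℕ → ℕ)
    (hf : ∀ p ∈ J, f p < p) {x y : ℕ → α} (hx : ∀ p ∈ J, x p = x (f p))
    (hy : ∀ p ∈ J, y p = y (f p)) (hxy : Set.EqOn x y Jᶜ) : x = y := by
  funext p
  induction p using Nat.strong_induction_on with
  | _ p ih =>
    by_cases hp : p ∈ J
    · rw [hx p hp, hy p hp, ih _ (hf p hp)]
    · exact hxy hp

theorem extStr_injective {n σ : ℕ} [NeZero σ] : Function.Injective (extStr (n := n) (σ := σ)) := by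
  intro x y h
  funext p
  simpa [extStr] using congrFun h p

theorem card_filter_copies_le {n σ : ℕ} [NeZero σ] {J : Finset ℕ} (hJ : J ⊆ range n)
    (f : ℕ → ℕ) (hf : ∀ p ∈ J, f p < p) :
    #{x : Fin n → Fin σ | ∀ p ∈ J, extStr x p = extStr x (f p)} * σ ^ #J ≤ σ ^ n := by
  let restrict (x : Fin n → Fin σ) (p : ↥(range n \ J)) : Fin σ :=
    x ⟨p, mem_range.1 (mem_sdiff.1 p.2).1⟩
  have hJn : #J ≤ n := by simpa using card_le_card hJ
  calc #{x : Fin n → Fin σ | ∀ p ∈ J, extStr x p = extStr x (f p)} * σ ^ #J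
      ≤ #(univ : Finset (↥(range n \ J) → Fin σ)) * σ ^ #J := by
        gcongr
        refine card_le_card_of_injOn restrict (fun _ _ ↦ mem_univ _) ?_
        intro x hx y hy hxy
        simp only [coe_filter, mem_univ, true_and, Set.mem_ofPred_eq] at hx hy
        refine extStr_injective (eq_of_copies_of_eqOn_compl f hf hx hy fun p hp ↦ ?_)
        by_cases hpn : p < n
        · simpa [extStr, hpn, restrict] using congrFun hxy ⟨p, mem_sdiff.2 ⟨mem_range.2 hpn, hp⟩⟩
        · simp [extStr, hpn]
    _ = σ ^ n := by
        rw [card_univ, Fintype.card_fun, Fintype.card_coe, card_sdiff_of_subset hJ, card_range,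
          Fintype.card_fin, ← pow_add, Nat.sub_add_cancel hJn]

theorem card_filter_div_pow_le_one {n σ : ℕ} (P : (Fin n → Fin σ) → Prop) [DecidablePred P] :
    (#{x | P x} : ℝ) / σ ^ n ≤ 1 := by
  refine div_le_one_of_le₀ ?_ (by positivity)
  exact_mod_cast (card_filter_le _ _).trans (by simp)

section LcpK

variable {n σ k : ℕ} [NeZero σ]

def mismatches (x : Fin n → Fin σ) (i j m : ℕ) : Finset ℕ :=
  {t ∈ range m | extStr x (i + t) ≠ extStr x (j + t)}

theorem add_le_and_card_mismatches_le_of_le_lcpK (x : Fin n → Fin σ) {i j m : ℕ}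
    (hi : i ≤ n) (hj : j ≤ n) (hm : m ≤ lcpK n σ k x i j) :
    j + m ≤ n ∧ #(mismatches x i j m) ≤ k := by
  change m ≤ Nat.findGreatest (fun ℓ ↦ i + ℓ ≤ n ∧ j + ℓ ≤ n ∧ #(mismatches x i j ℓ) ≤ k) n
    at hm
  obtain ⟨-, hjℓ, hℓ⟩ := Nat.findGreatest_spec (Nat.zero_le n)
    (P := fun ℓ ↦ i + ℓ ≤ n ∧ j + ℓ ≤ n ∧ #(mismatches x i j ℓ) ≤ k)
    ⟨by simpa, by simpa, by simp [mismatches]⟩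
  exact ⟨by omega,
    (card_le_card (filter_subset_filter _ (range_subset_range.2 hm))).trans hℓ⟩

theorem card_le_lcpK_mul_le {i j m : ℕ} (hij : i < j) (hj : j ≤ n) (hkm : k ≤ m) :
    #{x : Fin n → Fin σ | m ≤ lcpK n σ k x i j} * σ ^ (m - k) ≤ m.choose k * σ ^ n := by
  by_cases hjm : j + m ≤ n
  swap
  · rw [card_eq_zero.2 (filter_eq_empty_iff.2 fun x _ hx ↦
      hjm (add_le_and_card_mismatches_le_of_le_lcpK x (by omega) (by omega) hx).1), zero_mul]
    exact Nat.zero_le _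
  let agreeOff (S : Finset ℕ) : Finset (Fin n → Fin σ) :=
    {x | ∀ p ∈ (range m \ S).image (j + ·), extStr x p = extStr x (p - (j - i))}
  have hcover : ({x | m ≤ lcpK n σ k x i j} : Finset (Fin n → Fin σ)) ⊆
      (powersetCard k (range m)).biUnion agreeOff := by
    intro x hx
    obtain ⟨-, hcard⟩ := add_le_and_card_mismatches_le_of_le_lcpK x (by omega) (by omega)
      (mem_filter.1 hx).2
    obtain ⟨S, hMS, hSm, hScard⟩ := exists_subsuperset_card_eq (filter_subset _ _) hcard
      (by simpa using hkm)
    refine mem_biUnion.2 ⟨S, mem_powersetCard.2 ⟨hSm, hScard⟩, mem_filter.2 ⟨mem_univ _, ?_⟩⟩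
    simp only [mem_image, mem_sdiff, mem_range]
    rintro _ ⟨t, ⟨htm, htS⟩, rfl⟩
    rw [show j + t - (j - i) = i + t by omega]
    by_contra hne
    exact htS (hMS (mem_filter.2 ⟨mem_range.2 htm, Ne.symm hne⟩))
  have hagree : ∀ S ∈ powersetCard k (range m), #(agreeOff S) * σ ^ (m - k) ≤ σ ^ n := by
    intro S hS
    obtain ⟨hSm, hScard⟩ := mem_powersetCard.1 hS
    have hJcard : #((range m \ S).image (j + ·)) = m - k := by
      rw [card_image_of_injective _ (add_right_injective j), card_sdiff_of_subset hSm,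
        card_range, hScard]
    have hJ : ∀ p ∈ (range m \ S).image (j + ·), j ≤ p ∧ p < n := by
      intro p hp
      obtain ⟨t, ht, rfl⟩ := mem_image.1 hp
      have := mem_range.1 (mem_sdiff.1 ht).1
      omega
    rw [← hJcard]
    exact card_filter_copies_le (fun p hp ↦ mem_range.2 (hJ p hp).2) _
      fun p hp ↦ by have := hJ p hp; omega
  calc #{x : Fin n → Fin σ | m ≤ lcpK n σ k x i j} * σ ^ (m - k)
      ≤ (∑ S ∈ powersetCard k (range m), #(agreeOff S)) * σ ^ (m - k) := by
        gcongr
        exact (card_le_card hcover).trans card_biUnion_le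
    _ ≤ ∑ S ∈ powersetCard k (range m), σ ^ n := by
        rw [sum_mul]
        exact sum_le_sum hagree
    _ = m.choose k * σ ^ n := by simp

theorem card_le_lcpK_div_le (hσ : 2 ≤ σ) {i j : ℕ} (hij : i < j) (hj : j ≤ n) (m : ℕ) :
    (#{x : Fin n → Fin σ | m ≤ lcpK n σ k x i j} : ℝ) / σ ^ n ≤ (2 * σ) ^ k * (3 / 4) ^ m := by
  have hσ' : (2 : ℝ) ≤ σ := by exact_mod_cast hσ
  rcases lt_or_ge m k with hmk | hkm
  · calc (#{x : Fin n → Fin σ | m ≤ lcpK n σ k x i j} : ℝ) / σ ^ n ≤ 1 :=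
          card_filter_div_pow_le_one _
      _ ≤ (4 * (3 / 4 : ℝ)) ^ m := one_le_pow₀ (by norm_num)
      _ = 4 ^ m * (3 / 4) ^ m := mul_pow _ _ _
      _ ≤ (2 * σ) ^ k * (3 / 4) ^ m := by
          gcongr
          calc (4 : ℝ) ^ m ≤ 4 ^ k := pow_le_pow_right₀ (by norm_num) hmk.le
            _ ≤ (2 * σ) ^ k := by gcongr; linarith
  have hcount : (#{x : Fin n → Fin σ | m ≤ lcpK n σ k x i j} : ℝ) * σ ^ (m - k)
      ≤ m.choose k * σ ^ n := by exact_mod_cast card_le_lcpK_mul_le hij hj hkm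
  have hbinom : (m.choose k : ℝ) ≤ 2 ^ k * (3 / 2) ^ m := by
    have := choose_mul_pow_le_add_pow (by norm_num : (0 : ℝ) ≤ 1 / 2) m k
    rwa [div_pow, one_pow, mul_one_div, div_le_iff₀ (by positivity), mul_comm,
      show (1 : ℝ) + 1 / 2 = 3 / 2 by norm_num] at this
  rw [div_le_iff₀ (by positivity)]
  refine le_of_mul_le_mul_right ?_ (by positivity : (0 : ℝ) < σ ^ m)
  calc (#{x : Fin n → Fin σ | m ≤ lcpK n σ k x i j} : ℝ) * σ ^ m
      = #{x : Fin n → Fin σ | m ≤ lcpK n σ k x i j} * σ ^ (m - k) * σ ^ k := by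
        rw [mul_assoc, ← pow_add, Nat.sub_add_cancel hkm]
    _ ≤ m.choose k * σ ^ n * σ ^ k := by gcongr
    _ ≤ 2 ^ k * (3 / 2) ^ m * σ ^ n * σ ^ k := by gcongr
    _ = (3 / 2) ^ m * ((2 * σ) ^ k * σ ^ n) := by ring
    _ ≤ (3 / 4 * σ) ^ m * ((2 * σ) ^ k * σ ^ n) := by gcongr; linarith
    _ = (2 * σ) ^ k * (3 / 4) ^ m * σ ^ n * σ ^ m := by ring

theorem maxLcpK_le (x : Fin n → Fin σ) : maxLcpK n σ k x ≤ n :=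
  Finset.sup_le fun _ _ ↦ Nat.findGreatest_le n

theorem card_le_maxLcpK_div_le (hσ : 2 ≤ σ) {m : ℕ} (hm : 1 ≤ m) :
    (#{x : Fin n → Fin σ | m ≤ maxLcpK n σ k x} : ℝ) / σ ^ n
      ≤ n ^ 2 * (2 * σ) ^ k * (3 / 4) ^ m := by
  set pairs := (range n ×ˢ range n).filter fun p ↦ p.1 < p.2
  have hcover : ({x | m ≤ maxLcpK n σ k x} : Finset (Fin n → Fin σ)) ⊆
      pairs.biUnion fun p ↦ {x | m ≤ lcpK n σ k x p.1 p.2} := by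
    intro x hx
    obtain ⟨p, hp, hpm⟩ := (Finset.le_sup_iff (show ⊥ < m from hm)).1 (mem_filter.1 hx).2
    exact mem_biUnion.2 ⟨p, hp, mem_filter.2 ⟨mem_univ _, hpm⟩⟩
  have hpairs : (#pairs : ℝ) ≤ n ^ 2 := by
    exact_mod_cast (card_filter_le _ _).trans (by simp [sq])
  calc (#{x : Fin n → Fin σ | m ≤ maxLcpK n σ k x} : ℝ) / σ ^ n
      ≤ (∑ p ∈ pairs, #{x : Fin n → Fin σ | m ≤ lcpK n σ k x p.1 p.2} : ℕ) / σ ^ n := by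
        gcongr
        exact (card_le_card hcover).trans card_biUnion_le
    _ = ∑ p ∈ pairs, (#{x : Fin n → Fin σ | m ≤ lcpK n σ k x p.1 p.2} : ℝ) / σ ^ n := by
        rw [Nat.cast_sum, sum_div]
    _ ≤ ∑ p ∈ pairs, (2 * σ : ℝ) ^ k * (3 / 4) ^ m := by
        refine sum_le_sum fun p hp ↦ ?_
        simp only [pairs, mem_filter, mem_product, mem_range] at hp
        exact card_le_lcpK_div_le hσ hp.2 hp.1.2.le m
    _ ≤ n ^ 2 * (2 * σ) ^ k * (3 / 4) ^ m := by
        rw [sum_const, nsmul_eq_mul, mul_assoc]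
        gcongr

end LcpK

theorem sq_mul_pow_mul_pow_le_one {σ n : ℝ} {k B : ℕ} (hσ : 1 < σ) (hn : 1 ≤ n)
    (hB : 2 * Real.log (2 * σ) / Real.log (4 / 3) * (Real.logb σ n + k) ≤ B) :
    n ^ 2 * (2 * σ) ^ k * (3 / 4) ^ B ≤ 1 := by
  have hL : 0 < Real.log (4 / 3) := Real.log_pos (by norm_num)
  have hlogσ : 0 < Real.log σ := Real.log_pos hσ
  have hlog2σ : Real.log σ ≤ Real.log (2 * σ) := Real.log_le_log (by linarith) (by linarith)
  have hlogn : Real.log n = Real.log σ * Real.logb σ n := by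
    rw [Real.logb, mul_div_cancel₀ _ hlogσ.ne']
  have hlogb : 0 ≤ Real.logb σ n := Real.logb_nonneg hσ hn
  have hBL : 2 * Real.log (2 * σ) * (Real.logb σ n + k) ≤ B * Real.log (4 / 3) := by
    rwa [div_mul_eq_mul_div, div_le_iff₀ hL] at hB
  rw [← Real.log_nonpos_iff (by positivity), Real.log_mul (by positivity) (by positivity),
    Real.log_mul (by positivity) (by positivity), Real.log_pow, Real.log_pow, Real.log_pow,
    show (3 / 4 : ℝ) = (4 / 3)⁻¹ by norm_num, Real.log_inv, hlogn]
  nlinarith [mul_le_mul_of_nonneg_right hlog2σ hlogb, (Nat.cast_nonneg k : (0 : ℝ) ≤ k)]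

theorem expected_max_lcp_k (σ : ℕ) [NeZero σ] (hσ : 2 ≤ σ) :
    ∃ α A : ℝ, 0 < α ∧ 0 ≤ A ∧
      ∀ n k : ℕ, 2 ≤ n → 1 ≤ k → (k : ℝ) ≤ Real.log n / Real.log (Real.log n) →
        (∑ x : Fin n → Fin σ, (maxLcpK n σ k x : ℝ))
            / (Fintype.card (Fin n → Fin σ) : ℝ)
          ≤ α * (Real.logb σ n + k) + A := by
  have hσ' : (1 : ℝ) < σ := by exact_mod_cast hσ
  set α := 2 * Real.log (2 * σ) / Real.log (4 / 3)
  have hα : 0 < α :=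
    div_pos (mul_pos two_pos (Real.log_pos (by linarith))) (Real.log_pos (by norm_num))
  refine ⟨α, 5, hα, by norm_num, fun n k hn _ _ ↦ ?_⟩
  have hn' : (1 : ℝ) ≤ n := by exact_mod_cast (by omega : 1 ≤ n)
  set B := ⌈α * (Real.logb σ n + k)⌉₊
  have hB : (n : ℝ) ^ 2 * (2 * σ) ^ k * (3 / 4) ^ B ≤ 1 :=
    sq_mul_pow_mul_pow_le_one hσ' hn' (Nat.le_ceil _)
  have hsum := sum_eq_sum_range_card_filter_lt univ (maxLcpK n σ k) fun x _ ↦ maxLcpK_le x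
  rw [Fintype.card_fun, Fintype.card_fin, Fintype.card_fin, ← Nat.cast_sum, hsum, Nat.cast_sum,
    Nat.cast_pow, sum_div]
  calc ∑ m ∈ range n, (#{x : Fin n → Fin σ | m < maxLcpK n σ k x} : ℝ) / σ ^ n
      ≤ B + 1 / (1 - 3 / 4) :=
        sum_range_le_of_le_one_of_le_geom (fun _ ↦ by positivity)
          (fun _ ↦ card_filter_div_pow_le_one _)
          (fun m ↦ (card_le_maxLcpK_div_le hσ m.succ_pos).trans
            (mul_le_mul_of_nonneg_left (pow_le_pow_of_le_one (by norm_num) (by norm_num)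
              m.le_succ) (by positivity)))
          (by norm_num) (by norm_num) hB n
    _ ≤ α * (Real.logb σ n + k) + 5 := by
        have := Nat.ceil_lt_add_one
          (mul_nonneg hα.le (add_nonneg (Real.logb_nonneg hσ' hn') k.cast_nonneg))
        rw [show (1 : ℝ) / (1 - 3 / 4) = 4 by norm_num]
        linarith
end
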